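/- arXiv:0910.5099 — 5 statements merged into one kernel-verified Lean document; each statement's English description precedes it below -/
import Mathlib

section
/- In the Dolev-Yao equational theory, the strand s = (enc(enc(a,k'),k), enc(a,k'), k, k', a) refines the strand s' = (enc(enc(a,k'),k), enc(a,k'), k, k'', a), where a, k, k', k'' are distinct free constants. -/
/-- Terms over the Dolev-Yao signature, with atoms of type `α`
(atoms are free constants in ground terms, and variables/holes in contexts). -/
inductive DY (α : Type) : Type
  | atom : α → DY α
  | pair : DY α → DY α → DY α
  | fst  : DY α → DY α
  | snd  : DY α → DY α
  | enc  : DY α → DY α → DY α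
  | dec  : DY α → DY α → DY α
  | inv  : DY α → DY α

/-- Substitution of terms for atoms; applying a context `C : DY (Fin n)`
to a strand `s : Fin n → DY α` is `C.bind s`. -/
def DY.bind {α β : Type} (t : DY α) (f : α → DY β) : DY β :=
  match t with
  | .atom a => f a
  | .pair t u => .pair (t.bind f) (u.bind f)
  | .fst t => .fst (t.bind f)
  | .snd t => .snd (t.bind f)
  | .enc t u => .enc (t.bind f) (u.bind f)
  | .dec t u => .dec (t.bind f) (u.bind f)
  | .inv t => .inv (t.bind f)

/-- The congruence generated by the Dolev-Yao equations
`π₁⟨x,y⟩ = x`, `π₂⟨x,y⟩ = y`, `dec(enc(x,y), y⁻¹) = x`. -/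
inductive eqDY {α : Type} : DY α → DY α → Prop
  | refl (t : DY α) : eqDY t t
  | symm {t u : DY α} : eqDY t u → eqDY u t
  | trans {t u v : DY α} : eqDY t u → eqDY u v → eqDY t v
  | pairCong {t t' u u' : DY α} : eqDY t t' → eqDY u u' →
      eqDY (.pair t u) (.pair t' u')
  | fstCong {t t' : DY α} : eqDY t t' → eqDY (.fst t) (.fst t')
  | sndCong {t t' : DY α} : eqDY t t' → eqDY (.snd t) (.snd t')
  | encCong {t t' u u' : DY α} : eqDY t t' → eqDY u u' →
      eqDY (.enc t u) (.enc t' u')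
  | decCong {t t' u u' : DY α} : eqDY t t' → eqDY u u' →
      eqDY (.dec t u) (.dec t' u')
  | invCong {t t' : DY α} : eqDY t t' → eqDY (.inv t) (.inv t')
  | fstPair (t u : DY α) : eqDY (.fst (.pair t u)) t
  | sndPair (t u : DY α) : eqDY (.snd (.pair t u)) u
  | decEnc (t u : DY α) : eqDY (.dec (.enc t u) (.inv u)) t

/-!
Renaming the constant `k''` to `k'` maps `s'` onto `s`. The Dolev-Yao congruence is stable under
substitution of terms for constants, so every equality between contexts applied to `s'` survives
the renaming and is therefore an equality between the same contexts applied to `s`.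
-/

theorem DY.bind_bind {α β γ : Type} (t : DY α) (f : α → DY β) (g : β → DY γ) :
    (t.bind f).bind g = t.bind (fun a => (f a).bind g) := by
  induction t <;> simp only [DY.bind, *]

theorem eqDY.bind {α β : Type} {t u : DY α} (h : eqDY t u) (f : α → DY β) :
    eqDY (t.bind f) (u.bind f) := by
  induction h with
  | refl _ => exact .refl _
  | symm _ ih => exact ih.symm
  | trans _ _ ih₁ ih₂ => exact ih₁.trans ih₂
  | pairCong _ _ ih₁ ih₂ => exact .pairCong ih₁ ih₂
  | fstCong _ ih => exact .fstCong ih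
  | sndCong _ ih => exact .sndCong ih
  | encCong _ _ ih₁ ih₂ => exact .encCong ih₁ ih₂
  | decCong _ _ ih₁ ih₂ => exact .decCong ih₁ ih₂
  | invCong _ ih => exact .invCong ih
  | fstPair _ _ => exact .fstPair _ _
  | sndPair _ _ => exact .sndPair _ _
  | decEnc _ _ => exact .decEnc _ _

theorem eqDY.bind_of_bind_eq {ι α β : Type} {C₁ C₂ : DY ι} {s : ι → DY α} {t : ι → DY β}
    (σ : α → DY β) (hst : ∀ i, (s i).bind σ = t i) (h : eqDY (C₁.bind s) (C₂.bind s)) :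
    eqDY (C₁.bind t) (C₂.bind t) := by
  obtain rfl : (fun i => (s i).bind σ) = t := funext hst
  simpa only [DY.bind_bind] using h.bind σ

/-- with distinct free constants `a, k, k', k''` (the four
elements of `Fin 4`), the strand
`s = (enc(enc(a,k'),k), enc(a,k'), k, k', a)` refines
`s' = (enc(enc(a,k'),k), enc(a,k'), k, k'', a)` in the Dolev-Yao theory:
every context-pair equality modulo `eqDY` holding on `s'` holds on `s`. -/
theorem dy_refines_example :
    ∀ C₁ C₂ : DY (Fin 5),
      eqDY (C₁.bind (![DY.enc (DY.enc (DY.atom 0) (DY.atom 2)) (DY.atom 1),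
                       DY.enc (DY.atom 0) (DY.atom 2),
                       DY.atom 1, DY.atom 3, DY.atom 0] : Fin 5 → DY (Fin 4)))
           (C₂.bind (![DY.enc (DY.enc (DY.atom 0) (DY.atom 2)) (DY.atom 1),
                       DY.enc (DY.atom 0) (DY.atom 2),
                       DY.atom 1, DY.atom 3, DY.atom 0] : Fin 5 → DY (Fin 4))) →
      eqDY (C₁.bind (![DY.enc (DY.enc (DY.atom 0) (DY.atom 2)) (DY.atom 1),
                       DY.enc (DY.atom 0) (DY.atom 2),
                       DY.atom 1, DY.atom 2, DY.atom 0] : Fin 5 → DY (Fin 4)))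
           (C₂.bind (![DY.enc (DY.enc (DY.atom 0) (DY.atom 2)) (DY.atom 1),
                       DY.enc (DY.atom 0) (DY.atom 2),
                       DY.atom 1, DY.atom 2, DY.atom 0] : Fin 5 → DY (Fin 4))) := by
  intro C₁ C₂ h
  exact h.bind_of_bind_eq ![.atom 0, .atom 1, .atom 2, .atom 2] (by intro i; fin_cases i <;> rfl)
end

section
/- Under the interpretation of ground terms of the monoidal signature {+, -, 0, h_1, ..., h_n} over constants a_1,...,a_k into the free module (Z[X_1,...,X_n])^k, a context with m holes is interpreted as a Z[X_1,...,X_n]-linear map from ((Z[X_1,...,X_n])^k)^m to (Z[X_1,...,X_n])^k, and if the minus symbol '-' is not public then this linear map has all coefficients that are polynomials with non-negative integer coefficients. -/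
/-!
By induction on the context, its interpretation is `v ↦ ∑ i, p i • v i`, where the
coefficient `p i` is computed alongside: a hole contributes `1` to its own coefficient,
`+` and `-` act coefficientwise and `hⱼ` multiplies every coefficient by `Xⱼ`. Without `-`,
the coefficients are built from `0` and `1` by sums and multiplications by variables, so
they have non-negative coefficients.
-/

/-- The coefficient ring `ℤ[X₁,…,Xₙ]`. -/
abbrev PolyR (n : ℕ) := MvPolynomial (Fin n) ℤ

/-- The free module `(ℤ[X₁,…,Xₙ])^k` interpreting ground terms. -/
abbrev MonMod (n k : ℕ) := Fin k → PolyR n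

/-- Contexts over the monoidal signature `{+, -, 0, h₁, …, hₙ}` with `m`
holes (nullary symbols of a context are the public constant `0` and the
holes). -/
inductive MCtx (n m : ℕ) : Type
  | hole : Fin m → MCtx n m
  | zero : MCtx n m
  | add : MCtx n m → MCtx n m → MCtx n m
  | neg : MCtx n m → MCtx n m
  | hom : Fin n → MCtx n m → MCtx n m

/-- Interpretation of a context as a map `((ℤ[X])^k)^m → (ℤ[X])^k`:
`hᵢ` acts as multiplication by `Xᵢ`. -/
noncomputable def MCtx.interp {n m : ℕ} (k : ℕ) : MCtx n m → (Fin m → MonMod n k) → MonMod n k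
  | .hole i, v => v i
  | .zero, _ => 0
  | .add t u, v => t.interp k v + u.interp k v
  | .neg t, v => -(t.interp k v)
  | .hom i t, v => (MvPolynomial.X i : PolyR n) • t.interp k v

/-- A context does not use the minus symbol. -/
def MCtx.NoNeg {n m : ℕ} : MCtx n m → Prop
  | .hole _ => True
  | .zero => True
  | .add t u => t.NoNeg ∧ u.NoNeg
  | .neg _ => False
  | .hom _ t => t.NoNeg

namespace MCtx

variable {n m : ℕ}

noncomputable def coeff : MCtx n m → Fin m → PolyR n
  | .hole j => Pi.single j 1
  | .zero => 0
  | .add t u => t.coeff + u.coeff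
  | .neg t => -t.coeff
  | .hom j t => (MvPolynomial.X j : PolyR n) • t.coeff

theorem interp_eq_sum_coeff_smul (k : ℕ) (C : MCtx n m) (v : Fin m → MonMod n k) :
    C.interp k v = ∑ i, C.coeff i • v i := by
  induction C with
  | hole j => simp [interp, coeff, Pi.single_apply]
  | zero => simp [interp, coeff]
  | add t u iht ihu => simp [interp, coeff, iht, ihu, add_smul, Finset.sum_add_distrib]
  | neg t iht => simp [interp, coeff, iht]
  | hom j t iht => simp [interp, coeff, iht, Finset.smul_sum, smul_smul]

theorem coeff_nonneg_of_noNeg {C : MCtx n m} (hC : C.NoNeg) (i : Fin m) (d : Fin n →₀ ℕ) :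
    0 ≤ (C.coeff i).coeff d := by
  induction C generalizing d with
  | hole j =>
    rcases eq_or_ne i j with rfl | hij
    · simp only [coeff, Pi.single_eq_same, MvPolynomial.coeff_one]
      split <;> simp
    · simp [coeff, hij]
  | zero => simp [coeff]
  | add t u iht ihu => simpa [coeff] using add_nonneg (iht hC.1 d) (ihu hC.2 d)
  | neg t => exact hC.elim
  | hom j t iht =>
    simp only [coeff, Pi.smul_apply, smul_eq_mul, MvPolynomial.coeff_X_mul']
    split
    · exact iht hC _
    · rfl

theorem isLinearMap_interp (k : ℕ) (C : MCtx n m) :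
    IsLinearMap (PolyR n) (fun v : Fin m → MonMod n k => C.interp k v) := by
  have hinterp : (fun v : Fin m → MonMod n k => C.interp k v) =
      ⇑(∑ i, C.coeff i • LinearMap.proj i : (Fin m → MonMod n k) →ₗ[PolyR n] MonMod n k) := by
    funext v
    simp [C.interp_eq_sum_coeff_smul k v]
  exact hinterp ▸ LinearMap.isLinear _

end MCtx

/-- under the interpretation into `(ℤ[X₁,…,Xₙ])^k`, a context
with `m` holes is interpreted as a `ℤ[X₁,…,Xₙ]`-linear map from
`((ℤ[X₁,…,Xₙ])^k)^m` to `(ℤ[X₁,…,Xₙ])^k` (given by coefficients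
`p i ∈ ℤ[X₁,…,Xₙ]`, one per hole), and if the minus symbol is not used then
all these coefficients are polynomials with non-negative integer
coefficients. -/
theorem context_interp_linear_and_positive
    {n m : ℕ} (k : ℕ) (C : MCtx n m) :
    IsLinearMap (PolyR n) (fun v : Fin m → MonMod n k => C.interp k v) ∧
    ∃ p : Fin m → PolyR n,
      (∀ v : Fin m → MonMod n k, C.interp k v = ∑ i, p i • v i) ∧
      (C.NoNeg → ∀ (i : Fin m) (d : Fin n →₀ ℕ), 0 ≤ (p i).coeff d) :=
  ⟨C.isLinearMap_interp k, C.coeff, C.interp_eq_sum_coeff_smul k,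
    fun hC => MCtx.coeff_nonneg_of_noNeg hC⟩
end

section
/- For the monoidal deduction system interpreted into M = (Z[X_1,...,X_n])^k, let s be a positive strand of length m interpreted as a vector v ∈ M^m, and let s^* = { f linear form on M^m : f(v) = 0 } be its syzygy module. Then for a pair of contexts (C_1,C_2), C_1·s =_E C_2·s if and only if ([[C_1]] - [[C_2]])(v) = 0; consequently the map (C_1,C_2) ↦ [[C_1]] - [[C_2]] from P_s to s^* is surjective. -/
/-- Ground terms over the monoidal signature `{+, -, 0, h₁, …, hₙ}` with
constants `a₁, …, a_k`. -/
inductive MTerm (n k : ℕ) : Type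
  | const : Fin k → MTerm n k
  | zero : MTerm n k
  | add : MTerm n k → MTerm n k → MTerm n k
  | neg : MTerm n k → MTerm n k
  | hom : Fin n → MTerm n k → MTerm n k

/-- Interpretation `[[·]]` of ground terms into `(ℤ[X₁,…,Xₙ])^k`:
`[[aᵢ]] = eᵢ`, `[[hᵢ(t)]] = Xᵢ·[[t]]`, `[[t+u]] = [[t]]+[[u]]`,
`[[-t]] = -[[t]]`. -/
noncomputable def MTerm.interp {n k : ℕ} : MTerm n k → MonMod n k
  | .const i => Pi.single i 1
  | .zero => 0
  | .add t u => t.interp + u.interp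
  | .neg t => -t.interp
  | .hom i t => (MvPolynomial.X i : PolyR n) • t.interp

/-- Plugging ground terms into the holes of a context. -/
def MCtx.plug {n m k : ℕ} : MCtx n m → (Fin m → MTerm n k) → MTerm n k
  | .hole i, s => s i
  | .zero, _ => .zero
  | .add t u, s => .add (t.plug s) (u.plug s)
  | .neg t, s => .neg (t.plug s)
  | .hom i t, s => .hom i (t.plug s)

/-!
Plugging commutes with interpretation, so by faithfulness `C₁·s =_E C₂·s` says exactly that
`[[C₁]]` and `[[C₂]]` agree at `v`. For surjectivity, the forms realized by contexts form an
additive group (via `+`, `0`, `-`) that is stable under each `Xᵢ` (via `hᵢ`), hence under all of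
`ℤ[X]`; it contains the projections (the holes), so every linear form `w ↦ ∑ pᵢ wᵢ` is some
`[[C]]`, and a syzygy `p` is the image of the pair `(C, 0)`.
-/

namespace MCtx

variable {n m : ℕ}

lemma interp_plug {k : ℕ} (C : MCtx n m) (s : Fin m → MTerm n k) :
    (C.plug s).interp = C.interp k (fun i => (s i).interp) := by
  induction C with
  | hole i => rfl
  | zero => rfl
  | add t u ht hu => simp only [plug, MTerm.interp, MCtx.interp, ht, hu]
  | neg t ht => simp only [plug, MTerm.interp, MCtx.interp, ht]
  | hom i t ht => simp only [plug, MTerm.interp, MCtx.interp, ht]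

variable (k : ℕ)

def interpRange : AddSubgroup ((Fin m → MonMod n k) → MonMod n k) where
  carrier := Set.range (interp k)
  add_mem' := by
    rintro _ _ ⟨C₁, rfl⟩ ⟨C₂, rfl⟩
    exact ⟨.add C₁ C₂, rfl⟩
  zero_mem' := ⟨.zero, rfl⟩
  neg_mem' := by
    rintro _ ⟨C, rfl⟩
    exact ⟨.neg C, rfl⟩

lemma interp_mem_interpRange (C : MCtx n m) : C.interp k ∈ interpRange k :=
  ⟨C, rfl⟩

lemma smul_mem_interpRange (q : PolyR n) {f : (Fin m → MonMod n k) → MonMod n k}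
    (hf : f ∈ interpRange k) : q • f ∈ interpRange k := by
  induction q using MvPolynomial.induction_on with
  | C a =>
    rw [MvPolynomial.C_eq_smul_one, smul_assoc, one_smul]
    exact AddSubgroup.zsmul_mem _ hf a
  | add p q hp hq =>
    rw [add_smul]
    exact add_mem hp hq
  | mul_X p i hp =>
    obtain ⟨C, hC⟩ := hp
    refine ⟨.hom i C, ?_⟩
    rw [mul_comm, mul_smul, ← hC]
    rfl

lemma linearForm_mem_interpRange (p : Fin m → PolyR n) :
    (fun w => ∑ i, p i • w i) ∈ interpRange (n := n) k := by
  have hsum : (fun w : Fin m → MonMod n k => ∑ i, p i • w i) = ∑ i, p i • fun w => w i := by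
    ext w
    simp only [Finset.sum_apply, Pi.smul_apply]
  rw [hsum]
  exact sum_mem fun i _ => smul_mem_interpRange k (p i) (interp_mem_interpRange k (.hole i))

end MCtx

/-- for the monoidal deduction system interpreted (faithfully)
into `M = (ℤ[X₁,…,Xₙ])^k`, let `s` be a positive strand of length `m`
interpreted as `v` with `v i = [[s i]]`, and consider linear forms on `M^m`
given by coefficient vectors `p : Fin m → ℤ[X]`, `p · w = ∑ i, p i • w i`.
Then `C₁·s =_E C₂·s` iff `([[C₁]] - [[C₂]])(v) = 0`; consequently the map
`(C₁,C₂) ↦ [[C₁]] - [[C₂]]` from `P_s` to the syzygy module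
`s^* = {p | p · v = 0}` is surjective. -/
theorem monoidal_syzygy_surjective
    {n k m : ℕ}
    (eqE : MTerm n k → MTerm n k → Prop)
    (hfaithful : ∀ t u : MTerm n k, eqE t u ↔ t.interp = u.interp)
    (s : Fin m → MTerm n k) :
    (∀ C₁ C₂ : MCtx n m,
      eqE (C₁.plug s) (C₂.plug s) ↔
        C₁.interp k (fun i => (s i).interp) -
          C₂.interp k (fun i => (s i).interp) = 0) ∧
    (∀ p : Fin m → PolyR n,
      (∑ i, p i • (s i).interp) = 0 →
      ∃ C₁ C₂ : MCtx n m,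
        eqE (C₁.plug s) (C₂.plug s) ∧
        ∀ w : Fin m → MonMod n k,
          C₁.interp k w - C₂.interp k w = ∑ i, p i • w i) := by
  have hE : ∀ C₁ C₂ : MCtx n m, eqE (C₁.plug s) (C₂.plug s) ↔
      C₁.interp k (fun i => (s i).interp) - C₂.interp k (fun i => (s i).interp) = 0 := by
    intro C₁ C₂
    rw [hfaithful, MCtx.interp_plug, MCtx.interp_plug, sub_eq_zero]
  refine ⟨hE, fun p hp => ?_⟩
  obtain ⟨C, hC⟩ := MCtx.linearForm_mem_interpRange k p
  have hdiff : ∀ w, C.interp k w - (MCtx.zero : MCtx n m).interp k w = ∑ i, p i • w i :=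
    fun w => by rw [hC, MCtx.interp, sub_zero]
  exact ⟨C, .zero, (hE C .zero).2 ((hdiff _).trans hp), hdiff⟩
end

section
/- In the algorithm-produced active frame φ_r for role r, the evaluation of φ_r on input(r) equals strand(r) modulo the equational theory E; i.e., proving by induction on the position i that each sent message C'_i[M_1,...,M_{i-1}] computed via the reachability oracle is E-equal to M_i, and each received message is bound to the corresponding input message, yields φ_r · input(r) =_E strand(r). -/
/-! The evaluation of the compiled frame is followed step by step, keeping the messages produced
so far `eqE`-related, position by position, to the prefix `M₁, …, Mᵢ₋₁` the compiler saw.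
A received message is copied verbatim. A sent message is the oracle's context applied to the
produced messages; by congruence this is `eqE` to the same context applied to the prefix, hence
to `Mᵢ` by soundness of the oracle, which does answer because `Mᵢ` is reachable from the prefix. -/

/-- A step of an active frame: either send a message built by applying a
context to the previously produced messages, or receive a message checked
against a unification system (a finite list of context-pair equations over
the previously produced messages and the received one). -/
inductive Step (Ctx : Type) : Type
  | send : Ctx → Step Ctx
  | recv : List (Ctx × Ctx) → Step Ctx

/-- Evaluation of an active frame on a positive strand of inputs: send steps
produce the context applied to the already produced messages, receive steps
produce the next input message. -/
def evalAux {Term Ctx : Type} (apply : Ctx → List Term → Term) :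
    List Term → List (Step Ctx) → List Term → List Term
  | _, [], _ => []
  | acc, .send C :: rest, inp =>
      apply C acc :: evalAux apply (acc ++ [apply C acc]) rest inp
  | _, .recv _ :: _, [] => []
  | acc, .recv _ :: rest, m :: inp => m :: evalAux apply (acc ++ [m]) rest inp

/-- The frame accepts the input strand if all the unification systems of its
receive steps are satisfied (modulo `eqE`) by the produced messages. -/
def acceptsAux {Term Ctx : Type} (apply : Ctx → List Term → Term)
    (eqE : Term → Term → Prop) :
    List Term → List (Step Ctx) → List Term → Prop
  | _, [], inp => inp = []
  | acc, .send C :: rest, inp =>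
      acceptsAux apply eqE (acc ++ [apply C acc]) rest inp
  | _, .recv _ :: _, [] => False
  | acc, .recv S :: rest, m :: inp =>
      (∀ p ∈ S, eqE (apply p.1 (acc ++ [m])) (apply p.2 (acc ++ [m]))) ∧
      acceptsAux apply eqE (acc ++ [m]) rest inp

/-- A role specification strand: a list of messages with polarity
(`true` = sent `!`, `false` = received `?`). -/
abbrev Role (Term : Type) := List (Bool × Term)

/-- The input of a role: its received messages, in order. -/
def inputOf {Term : Type} (r : Role Term) : List Term :=
  (r.filter fun p => p.1 = false).map Prod.snd

/-- An active frame `φ` implements a role `r` if it accepts `input(r)` and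
its evaluation on `input(r)` equals the strand of `r` modulo `eqE`. -/
def Implements {Term Ctx : Type} (apply : Ctx → List Term → Term)
    (eqE : Term → Term → Prop) (φ : List (Step Ctx)) (r : Role Term) : Prop :=
  acceptsAux apply eqE [] φ (inputOf r) ∧
    List.Forall₂ eqE (evalAux apply [] φ (inputOf r)) (r.map Prod.snd)

/-- A role is executable if it admits an implementation. -/
def Executable {Term Ctx : Type} (apply : Ctx → List Term → Term)
    (eqE : Term → Term → Prop) (r : Role Term) : Prop :=
  ∃ φ : List (Step Ctx), Implements apply eqE φ r

/-- The compilation algorithm (cf. statement 5). -/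
def compile {Term Ctx : Type} [Inhabited Ctx]
    (reach : List Term → Term → Option Ctx)
    (basis : List Term → List (Ctx × Ctx)) (r : Role Term) :
    List (Step Ctx) :=
  (List.range r.length).map fun i =>
    match r[i]? with
    | some (true, m) =>
        .send ((reach ((r.map Prod.snd).take i) m).getD default)
    | some (false, _) => .recv (basis ((r.map Prod.snd).take (i + 1)))
    | none => .recv []

section Compile

variable {Term Ctx : Type} [Inhabited Ctx]
  (reach : List Term → Term → Option Ctx) (basis : List Term → List (Ctx × Ctx))

def compileStep (pre : List Term) : Bool × Term → Step Ctx
  | (true, m) => .send ((reach pre m).getD default)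
  | (false, m) => .recv (basis (pre ++ [m]))

def compileFrom : List Term → Role Term → List (Step Ctx)
  | _, [] => []
  | pre, x :: r => compileStep reach basis pre x :: compileFrom (pre ++ [x.2]) r

@[simp]
lemma length_compileFrom (pre : List Term) (r : Role Term) :
    (compileFrom reach basis pre r).length = r.length := by
  induction r generalizing pre <;> simp [compileFrom, *]

lemma getElem_compileFrom (pre : List Term) (r : Role Term) (i : ℕ)
    (h : i < (compileFrom reach basis pre r).length) :
    (compileFrom reach basis pre r)[i] =
      compileStep reach basis (pre ++ (r.map Prod.snd).take i) (r[i]'(by simpa using h)) := by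
  induction r generalizing pre i with
  | nil => simp at h
  | cons x r ih =>
    cases i with
    | zero => simp [compileFrom]
    | succ i => simp [compileFrom, ih]

lemma compile_eq_compileFrom (r : Role Term) :
    compile reach basis r = compileFrom reach basis [] r := by
  refine List.ext_getElem (by simp [compile]) fun i h _ => ?_
  have hi : i < r.length := by simpa [compile] using h
  rw [getElem_compileFrom]
  rcases hri : r[i] with ⟨_ | _, m⟩ <;>
    simp [compile, compileStep, List.getElem?_eq_getElem hi, List.take_add_one, hri]

end Compile

section Evaluation

variable {Term Ctx : Type} [Inhabited Ctx] {apply : Ctx → List Term → Term}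
  {eqE : Term → Term → Prop} {reach : List Term → Term → Option Ctx}

lemma eqE_apply_reach_getD (hsound : ∀ s t C, reach s t = some C → eqE (apply C s) t)
    (hcomplete : ∀ s t, (∃ C : Ctx, eqE (apply C s) t) → (reach s t).isSome)
    {s : List Term} {t : Term} (ht : ∃ C : Ctx, eqE (apply C s) t) :
    eqE (apply ((reach s t).getD default) s) t := by
  obtain ⟨C, hC⟩ := Option.isSome_iff_exists.mp (hcomplete s t ht)
  simpa [hC] using hsound s t C hC

lemma evalAux_compileStep_cons (hequiv : Equivalence eqE)
    (hcong : ∀ (C : Ctx) (l l' : List Term),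
      List.Forall₂ eqE l l' → eqE (apply C l) (apply C l'))
    (hsound : ∀ s t C, reach s t = some C → eqE (apply C s) t)
    (hcomplete : ∀ s t, (∃ C : Ctx, eqE (apply C s) t) → (reach s t).isSome)
    (basis : List Term → List (Ctx × Ctx)) {pre acc : List Term} (hacc : List.Forall₂ eqE acc pre)
    (x : Bool × Term) (hx : x.1 = true → ∃ C : Ctx, eqE (apply C pre) x.2)
    (φ : List (Step Ctx)) (r : Role Term) :
    ∃ out, eqE out x.2 ∧ evalAux apply acc (compileStep reach basis pre x :: φ) (inputOf (x :: r)) =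
      out :: evalAux apply (acc ++ [out]) φ (inputOf r) := by
  rcases x with ⟨_ | _, m⟩
  · exact ⟨m, hequiv.refl m, by simp [compileStep, inputOf, evalAux]⟩
  · exact ⟨_, hequiv.trans (hcong _ acc pre hacc) (eqE_apply_reach_getD hsound hcomplete (hx rfl)),
      by simp [compileStep, inputOf, evalAux]⟩

theorem forall₂_evalAux_compileFrom (hequiv : Equivalence eqE)
    (hcong : ∀ (C : Ctx) (l l' : List Term),
      List.Forall₂ eqE l l' → eqE (apply C l) (apply C l'))
    (hsound : ∀ s t C, reach s t = some C → eqE (apply C s) t)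
    (hcomplete : ∀ s t, (∃ C : Ctx, eqE (apply C s) t) → (reach s t).isSome)
    (basis : List Term → List (Ctx × Ctx)) (r : Role Term) {pre acc : List Term}
    (hacc : List.Forall₂ eqE acc pre)
    (hexec : ∀ j (h : j < r.length), r[j].1 = true →
      ∃ C : Ctx, eqE (apply C (pre ++ (r.map Prod.snd).take j)) r[j].2) :
    List.Forall₂ eqE (evalAux apply acc (compileFrom reach basis pre r) (inputOf r))
      (r.map Prod.snd) := by
  induction r generalizing pre acc with
  | nil => simp [compileFrom, evalAux]
  | cons x r ih =>
    have hx := hexec 0 (by simp)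
    rw [List.take_zero, List.append_nil] at hx
    obtain ⟨out, hout, heval⟩ := evalAux_compileStep_cons hequiv hcong hsound hcomplete basis hacc
      x hx (compileFrom reach basis (pre ++ [x.2]) r) r
    rw [compileFrom, heval, List.map_cons]
    refine .cons hout (ih (List.rel_append hacc (.cons hout .nil)) fun j hj hsend => ?_)
    have := hexec (j + 1) (by simpa using hj) hsend
    rwa [List.map_cons, List.take_succ_cons, ← List.singleton_append, ← List.append_assoc] at this

end Evaluation

/-- for the algorithm-produced frame `φ_r`, the evaluation of
`φ_r` on `input(r)` equals `strand(r)` modulo `E`: by induction on the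
position, each sent message computed via the reachability oracle (which
succeeds since each sent message `Mᵢ` is reachable from `M₁,…,M_{i-1}`, `r`
being executable) is `E`-equal to `Mᵢ`, and each received message is bound to
the corresponding input message. -/
theorem compile_eval_eq_strand
    {Term Ctx : Type} [Inhabited Ctx]
    (apply : Ctx → List Term → Term)
    (eqE : Term → Term → Prop)
    (hequiv : Equivalence eqE)
    (hcong : ∀ (C : Ctx) (l l' : List Term),
      List.Forall₂ eqE l l' → eqE (apply C l) (apply C l'))
    (reach : List Term → Term → Option Ctx)
    (hsound : ∀ s t C, reach s t = some C → eqE (apply C s) t)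
    (hcomplete : ∀ s t, (∃ C : Ctx, eqE (apply C s) t) → (reach s t).isSome)
    (basis : List Term → List (Ctx × Ctx))
    (r : Role Term)
    (hexec : ∀ i (h : i < r.length), (r.get ⟨i, h⟩).1 = true →
      ∃ C : Ctx, eqE (apply C ((r.map Prod.snd).take i)) (r.get ⟨i, h⟩).2) :
    List.Forall₂ eqE (evalAux apply [] (compile reach basis r) (inputOf r))
      (r.map Prod.snd) := by
  rw [compile_eq_compileFrom]
  exact forall₂_evalAux_compileFrom hequiv hcong hsound hcomplete basis r .nil
    fun j hj hsend => by simpa using hexec j hj hsend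
end

section
/- Let E be a subterm convergent theory and s a positive strand. If Eq(s) ⊆ P_{s'} for a positive strand s' of the same length, then P_s ⊆ P_{s'}. Consequently, defining P_s^f = Eq(s) (a finite set) witnesses that every subterm convergent deduction system has the finite basis property. -/
/-!
If `p₁·s =_E p₂·s`, convergence gives a common reduct `T` of both sides. Lemma 7, applied to
`pᵢ` with the messages of `s` as arguments (whose recipes are the variables, so the recipe term
is `pᵢ` itself), writes `T` as `Dᵢ[Nᵢ]` with `Nᵢ ∈ sat(s)` and `pᵢ·s' =_E Dᵢ[ζ_{Nᵢ}]·s'`.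
The two decompositions of `T` are syntactically equal, so Lemma 6 makes their recipe terms equal
on `s'`, and transitivity closes the chain `p₁ ~ D₁[ζ_{N₁}] ~ D₂[ζ_{N₂}] ~ p₂` on `s'`.
-/

section RecipeTransfer

variable {Term : Type} {n : ℕ} {CCtx : ℕ → Type}
  (plugT : ∀ {k : ℕ}, CCtx k → (Fin k → Term) → Term)
  (plugR : ∀ {k : ℕ}, CCtx k → (Fin k → CCtx n) → CCtx n)
  (hole : Fin n → CCtx n)

theorem plugT_plugR_hole
    (hhole : ∀ (s' : Fin n → Term) (i : Fin n), plugT (hole i) s' = s' i)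
    (hplug : ∀ {k : ℕ} (C : CCtx k) (ζ : Fin k → CCtx n) (s' : Fin n → Term),
      plugT (plugR C ζ) s' = plugT C (fun i => plugT (ζ i) s'))
    (C : CCtx n) (s' : Fin n → Term) :
    plugT (plugR C hole) s' = plugT C s' := by
  rw [hplug]
  simp only [hhole]

theorem eqE_plugT_of_recipe_transfer
    (hhole : ∀ (s' : Fin n → Term) (i : Fin n), plugT (hole i) s' = s' i)
    (hplug : ∀ {k : ℕ} (C : CCtx k) (ζ : Fin k → CCtx n) (s' : Fin n → Term),
      plugT (plugR C ζ) s' = plugT C (fun i => plugT (ζ i) s'))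
    (eqE : Term → Term → Prop) (hequiv : Equivalence eqE)
    (rwStar : Term → Term → Prop)
    (hconv : ∀ t u : Term, eqE t u ↔ ∃ T, rwStar t T ∧ rwStar u T)
    (s s' : Fin n → Term) (sat : Set Term) (hssat : ∀ i, s i ∈ sat)
    (zeta : Term → CCtx n) (hzetas : ∀ i, zeta (s i) = hole i)
    (transfer_eq : ∀ (k l : ℕ) (C₁ : CCtx k) (C₂ : CCtx l)
        (Ms : Fin k → Term) (Ms' : Fin l → Term),
        (∀ i, Ms i ∈ sat) → (∀ i, Ms' i ∈ sat) →
        plugT C₁ Ms = plugT C₂ Ms' →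
        eqE (plugT (plugR C₁ fun i => zeta (Ms i)) s')
            (plugT (plugR C₂ fun i => zeta (Ms' i)) s'))
    (transfer_rw : ∀ (k : ℕ) (C₁ : CCtx k) (Ms : Fin k → Term) (T : Term),
      (∀ i, Ms i ∈ sat) → rwStar (plugT C₁ Ms) T →
      ∃ (l : ℕ) (C₂ : CCtx l) (Ms' : Fin l → Term),
        (∀ i, Ms' i ∈ sat) ∧ T = plugT C₂ Ms' ∧
          eqE (plugT (plugR C₁ fun i => zeta (Ms i)) s')
              (plugT (plugR C₂ fun i => zeta (Ms' i)) s'))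
    {p₁ p₂ : CCtx n} (h : eqE (plugT p₁ s) (plugT p₂ s)) :
    eqE (plugT p₁ s') (plugT p₂ s') := by
  have own_recipes : (fun i => zeta (s i)) = hole := funext hzetas
  obtain ⟨T, hT₁, hT₂⟩ := (hconv _ _).mp h
  obtain ⟨l₁, D₁, N₁, hN₁, rfl, e₁⟩ := transfer_rw n p₁ s T hssat hT₁
  obtain ⟨l₂, D₂, N₂, hN₂, hT, e₂⟩ := transfer_rw n p₂ s _ hssat hT₂
  rw [own_recipes, plugT_plugR_hole plugT plugR hole hhole hplug] at e₁ e₂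
  have e₁₂ := transfer_eq _ _ D₁ D₂ N₁ N₂ hN₁ hN₂ hT
  exact hequiv.trans e₁ (hequiv.trans e₁₂ (hequiv.symm e₂))

end RecipeTransfer

theorem subterm_convergent_finite_basis_general
    {Term : Type} {n : ℕ} {CCtx : ℕ → Type}
    (plugT : ∀ {k : ℕ}, CCtx k → (Fin k → Term) → Term)
    (plugR : ∀ {k : ℕ}, CCtx k → (Fin k → CCtx n) → CCtx n)
    (hole : Fin n → CCtx n)
    (eqE : Term → Term → Prop) (hequiv : Equivalence eqE)
    (rwStar : Term → Term → Prop)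
    (hconv : ∀ t u : Term, eqE t u ↔ ∃ T, rwStar t T ∧ rwStar u T)
    (s : Fin n → Term)
    (sat : Set Term) (hssat : ∀ i, s i ∈ sat)
    (zeta : Term → CCtx n)
    (hzetas : ∀ i, zeta (s i) = hole i)
    (hhole : ∀ (s' : Fin n → Term) (i : Fin n), plugT (hole i) s' = s' i)
    (hplug : ∀ {k : ℕ} (C : CCtx k) (ζ : Fin k → CCtx n) (s' : Fin n → Term),
      plugT (plugR C ζ) s' = plugT C (fun i => plugT (ζ i) s'))
    (cE : ℕ) (csize : ∀ {k : ℕ}, CCtx k → ℕ)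
    (P : (Fin n → Term) → Set (CCtx n × CCtx n))
    (hP : ∀ s' : Fin n → Term,
      P s' = {p : CCtx n × CCtx n | eqE (plugT p.1 s') (plugT p.2 s')})
    (EqS : Set (CCtx n × CCtx n))
    (hEqS : EqS = {p : CCtx n × CCtx n |
      ∃ (k l : ℕ) (C₁ : CCtx k) (C₂ : CCtx l)
        (Ms : Fin k → Term) (Ms' : Fin l → Term),
        csize C₁ ≤ cE ∧ csize C₂ ≤ cE ∧
        (∀ i, Ms i ∈ sat) ∧ (∀ i, Ms' i ∈ sat) ∧
        p.1 = plugR C₁ (fun i => zeta (Ms i)) ∧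
        p.2 = plugR C₂ (fun i => zeta (Ms' i)) ∧
        eqE (plugT p.1 s) (plugT p.2 s)})
    (lem6 : ∀ s' : Fin n → Term, EqS ⊆ P s' →
      ∀ (k l : ℕ) (C₁ : CCtx k) (C₂ : CCtx l)
        (Ms : Fin k → Term) (Ms' : Fin l → Term),
        (∀ i, Ms i ∈ sat) → (∀ i, Ms' i ∈ sat) →
        plugT C₁ Ms = plugT C₂ Ms' →
        eqE (plugT (plugR C₁ fun i => zeta (Ms i)) s')
            (plugT (plugR C₂ fun i => zeta (Ms' i)) s'))
    (lem7 : ∀ (k : ℕ) (C₁ : CCtx k) (Ms : Fin k → Term) (T : Term),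
      (∀ i, Ms i ∈ sat) → rwStar (plugT C₁ Ms) T →
      ∃ (l : ℕ) (C₂ : CCtx l) (Ms' : Fin l → Term),
        (∀ i, Ms' i ∈ sat) ∧ T = plugT C₂ Ms' ∧
        ∀ s' : Fin n → Term, EqS ⊆ P s' →
          eqE (plugT (plugR C₁ fun i => zeta (Ms i)) s')
              (plugT (plugR C₂ fun i => zeta (Ms' i)) s')) :
    ∀ s' : Fin n → Term, P s ⊆ P s' ↔ EqS ⊆ P s' := by
  intro s'
  have hEqS_sub : EqS ⊆ P s := by
    intro p hp
    rw [hEqS] at hp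
    obtain ⟨-, -, -, -, -, -, -, -, -, -, -, -, hp_s⟩ := hp
    rwa [hP s]
  refine ⟨hEqS_sub.trans, fun hsub p hp => ?_⟩
  rw [hP] at hp ⊢
  refine eqE_plugT_of_recipe_transfer plugT plugR hole hhole hplug eqE hequiv rwStar hconv
    s s' sat hssat zeta hzetas (lem6 s' hsub) (fun k C Ms T hMs hT => ?_) hp
  obtain ⟨l, C₂, Ms', hMs', hT', heq⟩ := lem7 k C Ms T hMs hT
  exact ⟨l, C₂, Ms', hMs', hT', heq s' hsub⟩

/-- for a subterm convergent theory `E` (convergence of `E` is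
expressed by `hconv`: `E`-equality is joinability by `rwStar`), if
`Eq(s) ⊆ P_{s'}` then `P_s ⊆ P_{s'}`; consequently `P_s^f = Eq(s)` witnesses
the finite basis property: `P_s ⊆ P_{s'} ↔ Eq(s) ⊆ P_{s'}`.

Setup: `CCtx k` are contexts with `k` holes; `plugT` plugs ground terms into
the holes, `plugR` plugs recipes (contexts over the strand variables
`x₁,…,xₙ`, i.e. elements of `CCtx n`) into the holes; `hole i` is the `i`-th
variable, `zeta M` is the recipe of `M ∈ sat(s)` (with `ζ_{Mᵢ} = xᵢ` for the
messages of `s`); `Eq(s)` consists of the pairs of recipe terms built from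
contexts of size `≤ c_E` and arguments in `sat(s)` that are `E`-equal on `s`;
`lem6` and `lem7` are Lemmas 6 and 7 of Abadi–Cortier. -/
theorem subterm_convergent_finite_basis
    {Term : Type} {n : ℕ} {CCtx : ℕ → Type}
    (plugT : ∀ {k : ℕ}, CCtx k → (Fin k → Term) → Term)
    (plugR : ∀ {k : ℕ}, CCtx k → (Fin k → CCtx n) → CCtx n)
    (hole : Fin n → CCtx n)
    (eqE : Term → Term → Prop) (hequiv : Equivalence eqE)
    (rwStar : Term → Term → Prop)
    (hconv : ∀ t u : Term, eqE t u ↔ ∃ T, rwStar t T ∧ rwStar u T)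
    (s : Fin n → Term)
    (sat : Set Term) (hssat : ∀ i, s i ∈ sat)
    (zeta : Term → CCtx n)
    (hzeta : ∀ M ∈ sat, eqE (plugT (zeta M) s) M)
    (hzetas : ∀ i, zeta (s i) = hole i)
    (hhole : ∀ (s' : Fin n → Term) (i : Fin n), plugT (hole i) s' = s' i)
    (hplug : ∀ {k : ℕ} (C : CCtx k) (ζ : Fin k → CCtx n) (s' : Fin n → Term),
      plugT (plugR C ζ) s' = plugT C (fun i => plugT (ζ i) s'))
    (cE : ℕ) (csize : ∀ {k : ℕ}, CCtx k → ℕ)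
    (P : (Fin n → Term) → Set (CCtx n × CCtx n))
    (hP : ∀ s' : Fin n → Term,
      P s' = {p : CCtx n × CCtx n | eqE (plugT p.1 s') (plugT p.2 s')})
    (EqS : Set (CCtx n × CCtx n))
    (hEqS : EqS = {p : CCtx n × CCtx n |
      ∃ (k l : ℕ) (C₁ : CCtx k) (C₂ : CCtx l)
        (Ms : Fin k → Term) (Ms' : Fin l → Term),
        csize C₁ ≤ cE ∧ csize C₂ ≤ cE ∧
        (∀ i, Ms i ∈ sat) ∧ (∀ i, Ms' i ∈ sat) ∧
        p.1 = plugR C₁ (fun i => zeta (Ms i)) ∧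
        p.2 = plugR C₂ (fun i => zeta (Ms' i)) ∧
        eqE (plugT p.1 s) (plugT p.2 s)})
    (lem6 : ∀ s' : Fin n → Term, EqS ⊆ P s' →
      ∀ (k l : ℕ) (C₁ : CCtx k) (C₂ : CCtx l)
        (Ms : Fin k → Term) (Ms' : Fin l → Term),
        (∀ i, Ms i ∈ sat) → (∀ i, Ms' i ∈ sat) →
        plugT C₁ Ms = plugT C₂ Ms' →
        eqE (plugT (plugR C₁ fun i => zeta (Ms i)) s')
            (plugT (plugR C₂ fun i => zeta (Ms' i)) s'))
    (lem7 : ∀ (k : ℕ) (C₁ : CCtx k) (Ms : Fin k → Term) (T : Term),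
      (∀ i, Ms i ∈ sat) → rwStar (plugT C₁ Ms) T →
      ∃ (l : ℕ) (C₂ : CCtx l) (Ms' : Fin l → Term),
        (∀ i, Ms' i ∈ sat) ∧ T = plugT C₂ Ms' ∧
        ∀ s' : Fin n → Term, EqS ⊆ P s' →
          eqE (plugT (plugR C₁ fun i => zeta (Ms i)) s')
              (plugT (plugR C₂ fun i => zeta (Ms' i)) s')) :
    ∀ s' : Fin n → Term, P s ⊆ P s' ↔ EqS ⊆ P s' :=
  subterm_convergent_finite_basis_general plugT plugR hole eqE hequiv rwStar hconv s sat hssat zeta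
    hzetas hhole hplug cE csize P hP EqS hEqS lem6 lem7
end
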